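/- arXiv:1506.03542 — 4 statements merged into one kernel-verified Lean document; each statement's English description precedes it below -/
import Mathlib

section
/- Let ρ = p|0⟩⟨0| + (1−p)|1⟩⟨1| with 1/2 < p < 1 and N even. In the Schur-Weyl decomposition ρ^{⊗N} = ⊕_{j=0}^{N/2} q_{j,N} (ρ_j ⊗ I_{m_j}/m_j), the probability of the angular momentum quantum number j is q_{j,N} = ((2j+1)/(2j0)) [B(N+1,p,N/2+j+1) − B(N+1,p,N/2−j)], where B(n,p,k) = C(n,k) p^k (1−p)^{n−k} is the binomial probability mass function and j0 = (p−1/2)(N+1). -/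
/-! Write `N = 2n`, `a = n - j`, `b = n + j + 1`, so that `a + b = N + 1`. Multiplying the weight sum by
`p - (1 - p) = 2 (p - 1/2)` telescopes it (a geometric sum) to `p^b (1-p)^a - p^a (1-p)^b`, while
`(C(N,a) - C(N,b)) (N + 1) = (b - a) C(N+1,a)` with `b - a = 2j + 1`; the right-hand side is
`C(N+1,a)` times that same difference of monomials. -/

/-- The binomial probability mass function `B(n,p,k) = C(n,k) p^k (1-p)^(n-k)`. -/
noncomputable def binomPMF (n : ℕ) (p : ℝ) (k : ℕ) : ℝ :=
  (n.choose k : ℝ) * p ^ k * (1 - p) ^ (n - k)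

open Finset

theorem sub_mul_sum_pow_mul_pow {R : Type*} [CommRing R] (x y : R) (a d : ℕ) :
    (x - y) * ∑ m ∈ range (d + 1), x ^ (a + d - m) * y ^ (a + m)
      = x ^ (a + d + 1) * y ^ a - x ^ a * y ^ (a + d + 1) := by
  have hterm : ∀ m ∈ range (d + 1), x ^ (a + d - m) * y ^ (a + m)
      = (x * y) ^ a * (y ^ m * x ^ (d + 1 - 1 - m)) := by
    intro m hm
    rw [Nat.add_sub_cancel, Nat.add_sub_assoc (by simpa [Nat.lt_succ_iff] using hm)]
    ring
  rw [sum_congr rfl hterm, ← mul_sum, ← geom_sum₂_comm, mul_left_comm, mul_comm (x - y),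
    geom_sum₂_mul]
  ring

theorem choose_sub_choose_mul_succ {N a b : ℕ} (hab : a + b = N + 1) :
    ((N.choose a : ℝ) - N.choose b) * (N + 1) = ((b : ℝ) - a) * (N + 1).choose a := by
  have ha := N.choose_mul_succ_eq a
  have hb := N.choose_mul_succ_eq b
  rw [show N + 1 - a = b by omega] at ha
  rw [show N + 1 - b = a by omega, ← Nat.choose_symm_of_eq_add hab.symm] at hb
  have := congrArg (Nat.cast : ℕ → ℝ) ha
  have := congrArg (Nat.cast : ℕ → ℝ) hb
  push_cast at *
  linarith

theorem binomPMF_sub_binomPMF {n a b : ℕ} (hab : a + b = n) (p : ℝ) :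
    binomPMF n p b - binomPMF n p a
      = n.choose a * (p ^ b * (1 - p) ^ a - p ^ a * (1 - p) ^ b) := by
  rw [binomPMF, binomPMF, show n - b = a by omega, show n - a = b by omega,
    ← Nat.choose_symm_of_eq_add hab.symm]
  ring

theorem q_jN_formula_general (N : ℕ) (hN : Even N) (p : ℝ) (hp : 1 / 2 < p)
    (j : ℕ) (hj : j ≤ N / 2) :
    (((N.choose (N / 2 - j) : ℝ) - (N.choose (N / 2 + j + 1) : ℝ)) *
        ∑ m ∈ Finset.range (2 * j + 1), p ^ (N / 2 + j - m) * (1 - p) ^ (N / 2 - j + m))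
      = ((2 * (j : ℝ) + 1) / (2 * ((p - 1 / 2) * ((N : ℝ) + 1)))) *
        (binomPMF (N + 1) p (N / 2 + j + 1) - binomPMF (N + 1) p (N / 2 - j)) := by
  obtain ⟨a, hN2⟩ : ∃ a, N / 2 = a + j := ⟨N / 2 - j, by omega⟩
  have hab : a + (a + 2 * j + 1) = N + 1 := by obtain ⟨n, rfl⟩ := hN; omega
  rw [hN2, Nat.add_sub_cancel, add_assoc a j j, ← two_mul]
  have hsum := sub_mul_sum_pow_mul_pow p (1 - p) a (2 * j)
  have hchoose := choose_sub_choose_mul_succ hab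
  push_cast at hchoose
  rw [binomPMF_sub_binomPMF hab, div_mul_eq_mul_div, eq_div_iff (by nlinarith)]
  linear_combination ((N : ℝ) + 1) * ((N.choose a : ℝ) - N.choose (a + 2 * j + 1)) * hsum
    + (p ^ (a + 2 * j + 1) * (1 - p) ^ a - p ^ a * (1 - p) ^ (a + 2 * j + 1)) * hchoose

/-- In the Schur–Weyl decomposition of `ρ^{⊗N}` with
`ρ = p|0⟩⟨0| + (1-p)|1⟩⟨1|`, `1/2 < p < 1`, `N` even, the weight of the
angular-momentum-`j` block is
`q_{j,N} = m_j ⬝ ∑_{m=-j}^{j} p^{N/2+m} (1-p)^{N/2-m}`, where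
`m_j = C(N, N/2-j) - C(N, N/2-j-1)` is the multiplicity.  This weight equals
`((2j+1)/(2 j0)) [B(N+1,p,N/2+j+1) - B(N+1,p,N/2-j)]` with `j0 = (p-1/2)(N+1)`. -/
theorem q_jN_formula (N : ℕ) (hN : Even N) (p : ℝ) (hp : 1 / 2 < p) (hp1 : p < 1)
    (j : ℕ) (hj : j ≤ N / 2) :
    (((N.choose (N / 2 - j) : ℝ) - (N.choose (N / 2 + j + 1) : ℝ)) *
        ∑ m ∈ Finset.range (2 * j + 1), p ^ (N / 2 + j - m) * (1 - p) ^ (N / 2 - j + m))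
      = ((2 * (j : ℝ) + 1) / (2 * ((p - 1 / 2) * ((N : ℝ) + 1)))) *
        (binomPMF (N + 1) p (N / 2 + j + 1) - binomPMF (N + 1) p (N / 2 - j)) :=
  q_jN_formula_general N hN p hp j hj
end

section
/- Let C be a quantum channel (completely positive trace-preserving map) on a finite-dimensional Hilbert space, let Fix(C) be its set of fixed points, let {A_x} ⊂ Fix(C) be a family of positive semidefinite fixed points, and let E = ∫ μ(dx) A_x for a non-negative measure μ. Then the set A = E^{−1/2} Fix(C) E^{−1/2} (with inverse taken on the support of E) is a *-subalgebra of operators, and E^{1/2} A E^{1/2} ⊆ Fix(C). -/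
open Matrix MeasureTheory
open scoped ComplexOrder

/-!
Write `Φ X = ∑ Kᵢ X Kᵢᴴ` and `P = S Sinv` for the support projection of `E = S²`; `E` is fixed
by `Φ` since every `A x` is and `Φ` commutes with the integral. Invariance of `E` forces every `Kᵢ` to map the range of `P` into
itself, and then positivity and trace preservation show that `P B P` is fixed whenever `B` is:
first for positive `B`, then for all `B`, since the positive and negative parts of a fixed
Hermitian matrix are fixed.

Consequently the map `T Y = ∑ Gᵢ Y Gᵢᴴ` with `Gᵢ = Sinv Kᵢ S` fixes every `Y = Sinv B Sinv`,
satisfies `T 1 = P`, and its dual fixes `E`, which is faithful on the range of `P`. For such `Y`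
the Kadison–Schwarz defect `∑ [Y, Gᵢ] [Y, Gᵢ]ᴴ = T (Y Yᴴ) - Y Yᴴ` has zero `E`-weighted trace,
so `Y` commutes with every `Gᵢ`. Hence `T` fixes products of such `Y`, and
`Φ (S Y S) = S (T Y) S` turns them back into fixed points of `Φ`.
-/

/-- A linear map on matrices is a quantum channel if it admits a Kraus representation
`Φ(A) = ∑ i, K i * A * (K i)ᴴ` with `∑ i (K i)ᴴ * K i = 1` (so that it is completely
positive and trace preserving). -/
def IsQuantumChannel {n : Type*} [Fintype n] [DecidableEq n]
    (Φ : Matrix n n ℂ →ₗ[ℂ] Matrix n n ℂ) : Prop :=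
  ∃ (ι : Type) (_ : Fintype ι) (K : ι → Matrix n n ℂ),
    (∀ A, Φ A = ∑ i, K i * A * (K i)ᴴ) ∧ (∑ i, (K i)ᴴ * K i = 1)

namespace Matrix

section Integral

variable {𝕜 m n p q X : Type*} [RCLike 𝕜] [Fintype m] [Fintype n] [DecidableEq m] [DecidableEq n]
  [MeasurableSpace X] {μ : Measure X}

lemma linearMap_apply_eq_sum_single (f : Matrix m n 𝕜 →ₗ[𝕜] Matrix p q 𝕜) (M : Matrix m n 𝕜)
    (i : p) (j : q) :
    f M i j = ∑ k, ∑ l, M k l * f (single k l 1) i j := by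
  conv_lhs => rw [matrix_eq_sum_single M]
  have h (k : m) (l : n) : single k l (M k l) = M k l • single k l 1 := by
    rw [smul_single, smul_eq_mul, mul_one]
  simp only [map_sum, Matrix.sum_apply, h, map_smul, Matrix.smul_apply, smul_eq_mul]

lemma linearMap_of_integral_comm (f : Matrix m n 𝕜 →ₗ[𝕜] Matrix p q 𝕜) {A : X → Matrix m n 𝕜}
    (hA : ∀ i j, Integrable (fun x => A x i j) μ) :
    f (of fun i j => ∫ x, A x i j ∂μ) = of fun i j => ∫ x, f (A x) i j ∂μ := by
  ext i j
  have hfA : (fun x => f (A x) i j) = fun x => ∑ k, ∑ l, A x k l * f (single k l 1) i j :=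
    funext fun x => linearMap_apply_eq_sum_single f (A x) i j
  rw [linearMap_apply_eq_sum_single f _ i j, of_apply, hfA,
    integral_finsetSum _ fun k _ => integrable_finsetSum _ fun l _ => (hA k l).mul_const _]
  refine Finset.sum_congr rfl fun k _ => ?_
  rw [integral_finsetSum _ fun l _ => (hA k l).mul_const _]
  simp only [of_apply, integral_mul_const]

end Integral

variable {n ι : Type*} [Fintype n] [Fintype ι]

noncomputable def krausMap (K : ι → Matrix n n ℂ) : Matrix n n ℂ →ₗ[ℂ] Matrix n n ℂ where
  toFun M := ∑ i, K i * M * (K i)ᴴ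
  map_add' M N := by simp only [mul_add, add_mul, Finset.sum_add_distrib]
  map_smul' c M := by
    simp only [mul_smul_comm, smul_mul_assoc, Finset.smul_sum, RingHom.id_apply]

variable (K : ι → Matrix n n ℂ)

lemma krausMap_apply (M : Matrix n n ℂ) : krausMap K M = ∑ i, K i * M * (K i)ᴴ := rfl

lemma krausMap_conjTranspose (M : Matrix n n ℂ) : krausMap K Mᴴ = (krausMap K M)ᴴ := by
  simp [krausMap_apply, conjTranspose_sum, Matrix.mul_assoc]

lemma posSemidef_krausMap {M : Matrix n n ℂ} (hM : M.PosSemidef) : (krausMap K M).PosSemidef :=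
  posSemidef_sum _ fun i _ => hM.mul_mul_conjTranspose_same (K i)

lemma trace_mul_krausMap (ρ M : Matrix n n ℂ) :
    trace (ρ * krausMap K M) = trace ((∑ i, (K i)ᴴ * ρ * K i) * M) := by
  simp only [krausMap_apply, Finset.mul_sum, Finset.sum_mul, trace_sum]
  refine Finset.sum_congr rfl fun i _ => ?_
  rw [← Matrix.mul_assoc, ← Matrix.mul_assoc, trace_mul_cycle]
  simp only [Matrix.mul_assoc]

lemma mul_krausMap_mul_conjTranspose (A M : Matrix n n ℂ) :
    A * krausMap K M * Aᴴ = krausMap (fun i => A * K i) M := by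
  simp only [krausMap_apply, Finset.mul_sum, Finset.sum_mul, conjTranspose_mul, Matrix.mul_assoc]

lemma krausMap_mul_right (C M : Matrix n n ℂ) :
    krausMap (fun i => K i * C) M = krausMap K (C * M * Cᴴ) := by
  simp only [krausMap_apply, conjTranspose_mul, Matrix.mul_assoc]

lemma trace_mul_mul_of_isIdempotentElem {P : Matrix n n ℂ} (hP : IsIdempotentElem P)
    (M : Matrix n n ℂ) : trace (P * M * P) = trace (P * M) := by
  rw [trace_mul_cycle, hP.eq]

/-- The paper's `E^{-1/2}` for `S = E^{1/2}`: `Sinv` inverts `S` on its support. -/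
structure IsSupportInverse (S Sinv : Matrix n n ℂ) : Prop where
  isHermitian : S.IsHermitian
  isHermitian_inv : Sinv.IsHermitian
  mul_inv_mul : S * Sinv * S = S
  inv_mul_inv : Sinv * S * Sinv = Sinv
  commute : Commute S Sinv

namespace IsSupportInverse

variable {S Sinv : Matrix n n ℂ}

lemma isStarProjection (h : IsSupportInverse S Sinv) : IsStarProjection (S * Sinv) where
  isIdempotentElem := by rw [IsIdempotentElem, ← Matrix.mul_assoc, h.mul_inv_mul]
  isSelfAdjoint := by
    change (S * Sinv)ᴴ = S * Sinv
    rw [conjTranspose_mul, h.isHermitian.eq, h.isHermitian_inv.eq, h.commute.eq]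

lemma inv_mul_proj (h : IsSupportInverse S Sinv) : Sinv * (S * Sinv) = Sinv := by
  rw [← Matrix.mul_assoc, h.inv_mul_inv]

lemma proj_mul_inv (h : IsSupportInverse S Sinv) : S * Sinv * Sinv = Sinv := by
  rw [h.commute.eq, h.inv_mul_inv]

lemma mul_self_mul_inv_mul_inv (h : IsSupportInverse S Sinv) :
    S * S * (Sinv * Sinv) = S * Sinv :=
  calc S * S * (Sinv * Sinv) = S * (S * Sinv) * Sinv := by simp only [Matrix.mul_assoc]
    _ = S * (Sinv * S) * Sinv := by rw [h.commute.eq]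
    _ = S * Sinv := by rw [← Matrix.mul_assoc, h.mul_inv_mul]

lemma inv_mul_inv_mul_mul_self (h : IsSupportInverse S Sinv) :
    Sinv * Sinv * (S * S) = S * Sinv := by
  rw [← ((h.commute.mul_left h.commute).mul_right (h.commute.mul_left h.commute)).eq,
    h.mul_self_mul_inv_mul_inv]

lemma inv_mul_mul_self_mul_inv (h : IsSupportInverse S Sinv) :
    Sinv * (S * S) * Sinv = S * Sinv :=
  calc Sinv * (S * S) * Sinv = Sinv * S * (S * Sinv) := by simp only [Matrix.mul_assoc]
    _ = S * Sinv := by rw [← h.commute.eq, h.isStarProjection.isIdempotentElem.eq]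

lemma posSemidef_mul_self (h : IsSupportInverse S Sinv) : (S * S).PosSemidef := by
  simpa [h.isHermitian.eq] using posSemidef_conjTranspose_mul_self S

lemma krausMap_conj (h : IsSupportInverse S Sinv) (M : Matrix n n ℂ) :
    krausMap (fun i => Sinv * K i * S) M = Sinv * krausMap K (S * M * S) * Sinv := by
  rw [krausMap_mul_right (fun i => Sinv * K i) S M, ← mul_krausMap_mul_conjTranspose,
    h.isHermitian.eq, h.isHermitian_inv.eq]

end IsSupportInverse

variable [DecidableEq n]

lemma trace_krausMap (hK : ∑ i, (K i)ᴴ * K i = 1) (M : Matrix n n ℂ) :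
    trace (krausMap K M) = trace M := by
  simpa [hK] using trace_mul_krausMap K 1 M

open scoped MatrixOrder in
lemma PosSemidef.mul_conjTranspose_eq_zero_of_trace {X Q : Matrix n n ℂ} (hX : X.PosSemidef)
    (h : trace (Q * X * Qᴴ) = 0) : X * Qᴴ = 0 := by
  obtain ⟨R, rfl⟩ := CStarAlgebra.nonneg_iff_eq_star_mul_self.mp hX.nonneg
  rw [star_eq_conjTranspose] at h ⊢
  have : R * Qᴴ = 0 := by
    rw [← trace_conjTranspose_mul_self_eq_zero_iff, ← h]
    simp [Matrix.mul_assoc]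
  rw [Matrix.mul_assoc, this, Matrix.mul_zero]

open scoped MatrixOrder in
lemma IsHermitian.exists_posSemidef_sub {H : Matrix n n ℂ} (hH : H.IsHermitian) :
    ∃ Hp Hm P : Matrix n n ℂ, Hp.PosSemidef ∧ Hm.PosSemidef ∧ H = Hp - Hm ∧
      IsStarProjection P ∧ Hp * P = Hp ∧ Hm * P = 0 := by
  have hH' : IsSelfAdjoint H := hH
  have hc (f : ℝ → ℝ) : ContinuousOn f (spectrum ℝ H) := H.finite_real_spectrum.continuousOn f
  set χ : ℝ → ℝ := fun x => if 0 < x then 1 else 0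
  refine ⟨cfc (fun x : ℝ => max x 0) H, cfc (fun x : ℝ => max (-x) 0) H, cfc χ H,
    ?_, ?_, ?_, ?_, ?_, ?_⟩
  · exact (cfc_nonneg fun x _ => le_max_right x 0).posSemidef
  · exact (cfc_nonneg fun x _ => le_max_right (-x) 0).posSemidef
  · rw [← cfc_sub _ _ H (hc _) (hc _)]
    conv_lhs => rw [← cfc_id' ℝ H]
    exact cfc_congr fun x _ => (max_zero_sub_max_neg_zero_eq_self x).symm
  · refine ⟨?_, cfc_predicate χ H⟩
    rw [IsIdempotentElem, ← cfc_mul _ _ H (hc _) (hc _)]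
    exact cfc_congr fun x _ => by simp only [χ]; split_ifs <;> simp
  · rw [← cfc_mul _ _ H (hc _) (hc _)]
    refine cfc_congr fun x _ => ?_
    by_cases h : 0 < x
    · simp [χ, h]
    · simp [χ, h, max_eq_right (not_lt.mp h)]
  · rw [← cfc_mul _ _ H (hc _) (hc _), ← cfc_zero ℝ H]
    refine cfc_congr fun x _ => ?_
    by_cases h : 0 < x
    · simp [χ, h, h.le]
    · simp [χ, h]

lemma krausMap_eq_of_posSemidef_sub (hK : ∑ i, (K i)ᴴ * K i = 1) {Hp Hm P : Matrix n n ℂ}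
    (hHp : Hp.PosSemidef) (hHm : Hm.PosSemidef) (hP : IsStarProjection P)
    (hHpP : Hp * P = Hp) (hHmP : Hm * P = 0) (hfix : krausMap K (Hp - Hm) = Hp - Hm) :
    krausMap K Hp = Hp := by
  set X := krausMap K Hp
  set Y := krausMap K Hm
  have hPh : Pᴴ = P := hP.isSelfAdjoint
  have hQh : (1 - P)ᴴ = 1 - P := hP.one_sub.isSelfAdjoint
  have hXY : X - Y = Hp - Hm := by rw [← map_sub, hfix]
  -- Both compressions are positive, and trace preservation makes their traces cancel.
  have htrace : trace ((1 - P) * X * (1 - P)ᴴ) + trace (P * Y * Pᴴ) = 0 := by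
    have hPXY : trace (X * P) - trace (Y * P) = trace Hp := by
      rw [← trace_sub, ← sub_mul, hXY, sub_mul, hHpP, hHmP, sub_zero]
    rw [hQh, hPh, trace_mul_mul_of_isIdempotentElem hP.one_sub.isIdempotentElem,
      trace_mul_mul_of_isIdempotentElem hP.isIdempotentElem, sub_mul, one_mul, trace_sub,
      trace_mul_comm P, trace_mul_comm P, trace_krausMap K hK]
    linear_combination -hPXY
  have hX := (posSemidef_krausMap K hHp).mul_mul_conjTranspose_same (1 - P)
  have hY := (posSemidef_krausMap K hHm).mul_mul_conjTranspose_same P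
  obtain ⟨hX0, hY0⟩ := (add_eq_zero_iff_of_nonneg hX.trace_nonneg hY.trace_nonneg).mp htrace
  have hXP : X * P = X := by
    have h := (posSemidef_krausMap K hHp).mul_conjTranspose_eq_zero_of_trace hX0
    rwa [hQh, mul_sub, mul_one, sub_eq_zero, eq_comm] at h
  have hYP : Y * P = 0 := by
    simpa [hPh] using (posSemidef_krausMap K hHm).mul_conjTranspose_eq_zero_of_trace hY0
  calc X = X * P := hXP.symm
    _ = (X - Y) * P := by rw [sub_mul, hYP, sub_zero]
    _ = Hp := by rw [hXY, sub_mul, hHpP, hHmP, sub_zero]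

lemma mem_span_posSemidef_fixed (hK : ∑ i, (K i)ᴴ * K i = 1) {B : Matrix n n ℂ}
    (hB : krausMap K B = B) :
    B ∈ Submodule.span ℂ {A | A.PosSemidef ∧ krausMap K A = A} := by
  have hHerm {H : Matrix n n ℂ} (hH : H.IsHermitian) (hfix : krausMap K H = H) :
      H ∈ Submodule.span ℂ {A | A.PosSemidef ∧ krausMap K A = A} := by
    obtain ⟨Hp, Hm, P, hHp, hHm, rfl, hP, hHpP, hHmP⟩ := hH.exists_posSemidef_sub
    have hfixp := krausMap_eq_of_posSemidef_sub K hK hHp hHm hP hHpP hHmP hfix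
    have hfixm : krausMap K Hm = Hm := by
      rwa [map_sub, hfixp, sub_right_inj] at hfix
    exact sub_mem (Submodule.subset_span ⟨hHp, hfixp⟩) (Submodule.subset_span ⟨hHm, hfixm⟩)
  have hstar : krausMap K (star B) = star B := by
    rw [star_eq_conjTranspose, krausMap_conjTranspose, hB]
  rw [← realPart_add_I_smul_imaginaryPart B]
  refine add_mem (hHerm (realPart B).2 ?_) (Submodule.smul_mem _ _ (hHerm (imaginaryPart B).2 ?_))
  · rw [realPart_apply_coe, LinearMap.map_smul_of_tower, map_add, hB, hstar]
  · rw [imaginaryPart_apply_coe, map_smul, LinearMap.map_smul_of_tower, map_sub, hB, hstar]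

lemma PosSemidef.mul_conjTranspose_eq_zero_of_trace_krausMap {X : Matrix n n ℂ}
    (hX : X.PosSemidef) (h : trace (krausMap K X) = 0) (i : ι) : X * (K i)ᴴ = 0 := by
  rw [krausMap_apply, trace_sum] at h
  exact hX.mul_conjTranspose_eq_zero_of_trace <| congrFun ((Fintype.sum_eq_zero_iff_of_nonneg
    fun j => (hX.mul_mul_conjTranspose_same (K j)).trace_nonneg).mp h) i

lemma mul_kraus_mul_eq_zero_of_fixed {ρ Q : Matrix n n ℂ} (hρ : ρ.PosSemidef)
    (hfix : krausMap K ρ = ρ) (hQ : Q * ρ = 0) (i : ι) : Q * K i * ρ = 0 := by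
  have h : trace (krausMap (fun i => Q * K i) ρ) = 0 := by
    rw [← mul_krausMap_mul_conjTranspose, hfix, hQ, Matrix.zero_mul, trace_zero]
  simpa [hρ.isHermitian.eq] using
    congrArg conjTranspose (hρ.mul_conjTranspose_eq_zero_of_trace_krausMap _ h i)

lemma mul_kraus_mul_compl_mul_eq_zero (hK : ∑ i, (K i)ᴴ * K i = 1) {P B : Matrix n n ℂ}
    (hP : IsStarProjection P) (hKP : ∀ i, (1 - P) * K i * P = 0) (hB : B.PosSemidef)
    (hfix : krausMap K B = B) (i : ι) : P * K i * (1 - P) * B = 0 := by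
  set Q := 1 - P
  have hPh : Pᴴ = P := hP.isSelfAdjoint
  have hQh : Qᴴ = Q := hP.one_sub.isSelfAdjoint
  have hQKQ : (fun i => Q * K i * Q) = fun i => Q * K i := by
    funext i; rw [mul_sub, mul_one, hKP i, sub_zero]
  have hcompress : Q * krausMap K B * Q = Q * krausMap K (Q * B * Q) * Q := by
    simpa only [hQh] using (show Q * krausMap K B * Qᴴ = Q * krausMap K (Q * B * Qᴴ) * Qᴴ by
      rw [mul_krausMap_mul_conjTranspose, mul_krausMap_mul_conjTranspose, ← krausMap_mul_right,
        hQKQ])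
  -- The weight `Φ` moves from the `Q`-corner of `B` into the range of `P` is zero: nothing
  -- flows back from `P` to `Q`, and `Φ` preserves the trace of `Q B Q`.
  have hleak : trace (krausMap (fun i => P * K i * Q) B) = 0 := by
    have hsplit : trace (P * krausMap K (Q * B * Q)) + trace (Q * krausMap K (Q * B * Q))
        = trace (Q * B * Q) := by
      rw [← trace_add, ← add_mul, add_sub_cancel, one_mul, trace_krausMap K hK]
    have hQpart : trace (Q * krausMap K (Q * B * Q)) = trace (Q * B * Q) := by
      rw [← trace_mul_mul_of_isIdempotentElem hP.one_sub.isIdempotentElem, ← hcompress, hfix]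
    rw [krausMap_mul_right (fun j => P * K j) Q B, ← mul_krausMap_mul_conjTranspose, hPh, hQh,
      trace_mul_mul_of_isIdempotentElem hP.isIdempotentElem]
    linear_combination hsplit - hQpart
  simpa [hB.isHermitian.eq] using
    congrArg conjTranspose (hB.mul_conjTranspose_eq_zero_of_trace_krausMap _ hleak i)

lemma krausMap_compression_of_posSemidef (hK : ∑ i, (K i)ᴴ * K i = 1) {P B : Matrix n n ℂ}
    (hP : IsStarProjection P) (hKP : ∀ i, (1 - P) * K i * P = 0) (hB : B.PosSemidef)
    (hfix : krausMap K B = B) : krausMap K (P * B * P) = P * B * P := by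
  have hPh : Pᴴ = P := hP.isSelfAdjoint
  have hterm (i : ι) : K i * P * B * (K i * P)ᴴ = P * K i * B * (P * K i)ᴴ := by
    have hleft := mul_kraus_mul_compl_mul_eq_zero K hK hP hKP hB hfix i
    have hright : B * (P * K i * (1 - P))ᴴ = 0 := by
      simpa [hB.isHermitian.eq] using congrArg conjTranspose hleft
    have hKP' : K i * P = P * K i * P := by
      have := hKP i
      rwa [sub_mul, sub_mul, one_mul, sub_eq_zero] at this
    have hsplit : P * K i = P * K i * P + P * K i * (1 - P) := by
      rw [← mul_add, add_sub_cancel, mul_one]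
    rw [hsplit, hKP', add_mul, hleft, add_zero, conjTranspose_add, mul_add,
      Matrix.mul_assoc _ B (P * K i * (1 - P))ᴴ, hright, Matrix.mul_zero, add_zero]
  calc krausMap K (P * B * P) = krausMap (fun i => K i * P) B := by rw [krausMap_mul_right, hPh]
    _ = krausMap (fun i => P * K i) B := by simp only [krausMap_apply, hterm]
    _ = P * B * P := by rw [← mul_krausMap_mul_conjTranspose, hfix, hPh]

lemma krausMap_compression (hK : ∑ i, (K i)ᴴ * K i = 1) {P B : Matrix n n ℂ}
    (hP : IsStarProjection P) (hKP : ∀ i, (1 - P) * K i * P = 0)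
    (hfix : krausMap K B = B) : krausMap K (P * B * P) = P * B * P := by
  let compress : Matrix n n ℂ →ₗ[ℂ] Matrix n n ℂ :=
    LinearMap.mulLeft ℂ P ∘ₗ LinearMap.mulRight ℂ P
  have hcompress (M : Matrix n n ℂ) : compress M = P * M * P := (Matrix.mul_assoc _ _ _).symm
  suffices B ∈ LinearMap.ker ((krausMap K - LinearMap.id) ∘ₗ compress) by
    simpa [hcompress, sub_eq_zero] using this
  refine Submodule.span_le.mpr ?_ (mem_span_posSemidef_fixed K hK hfix)
  rintro A ⟨hA, hAfix⟩
  simp [hcompress, krausMap_compression_of_posSemidef K hK hP hKP hA hAfix]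

lemma krausMap_commutator_one (G : ι → Matrix n n ℂ) (Y : Matrix n n ℂ) :
    krausMap (fun i => Y * G i - G i * Y) 1 = Y * krausMap G 1 * Yᴴ - Y * krausMap G Yᴴ
      - krausMap G Y * Yᴴ + krausMap G (Y * Yᴴ) := by
  simp only [krausMap_apply, Finset.mul_sum, Finset.sum_mul, ← Finset.sum_sub_distrib,
    ← Finset.sum_add_distrib]
  refine Finset.sum_congr rfl fun i _ => ?_
  simp only [conjTranspose_sub, conjTranspose_mul]
  noncomm_ring

lemma mul_commutator_eq_zero_of_fixed {G : ι → Matrix n n ℂ} {ρ Y : Matrix n n ℂ}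
    (hρ : ρ.PosSemidef) (hρG : ∑ i, (G i)ᴴ * ρ * G i = ρ) (hY : krausMap G Y = Y)
    (hYH : krausMap G Yᴴ = Yᴴ) (hunit : Y * krausMap G 1 * Yᴴ = Y * Yᴴ) (i : ι) :
    ρ * (Y * G i - G i * Y) = 0 := by
  set D := fun i => Y * G i - G i * Y
  have hD : krausMap D 1 = krausMap G (Y * Yᴴ) - Y * Yᴴ := by
    rw [krausMap_commutator_one, hunit, hY, hYH]
    abel
  have htrace : trace (krausMap (fun i => (D i)ᴴ) ρ) = 0 := by
    calc trace (krausMap (fun i => (D i)ᴴ) ρ) = trace (ρ * krausMap D 1) := by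
          simpa [krausMap_apply] using (trace_mul_krausMap D ρ 1).symm
      _ = 0 := by rw [hD, mul_sub, trace_sub, trace_mul_krausMap, hρG, sub_self]
  simpa using hρ.mul_conjTranspose_eq_zero_of_trace_krausMap _ htrace i

namespace IsSupportInverse

variable {S Sinv : Matrix n n ℂ}

lemma compl_mul_kraus_mul_proj_eq_zero (h : IsSupportInverse S Sinv)
    (hfix : krausMap K (S * S) = S * S) (i : ι) :
    (1 - S * Sinv) * K i * (S * Sinv) = 0 := by
  have hQ : (1 - S * Sinv) * (S * S) = 0 := by
    rw [sub_mul, one_mul, ← Matrix.mul_assoc, h.mul_inv_mul, sub_self]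
  calc (1 - S * Sinv) * K i * (S * Sinv) = (1 - S * Sinv) * K i * (S * S) * (Sinv * Sinv) := by
        rw [Matrix.mul_assoc _ (S * S), h.mul_self_mul_inv_mul_inv]
    _ = 0 := by
        rw [mul_kraus_mul_eq_zero_of_fixed K h.posSemidef_mul_self hfix hQ i, Matrix.zero_mul]

lemma kraus_mul_eq_mul_conj (h : IsSupportInverse S Sinv) (hfix : krausMap K (S * S) = S * S)
    (i : ι) :
    K i * S = S * (Sinv * K i * S) := by
  have hKP : K i * (S * Sinv) = S * Sinv * K i * (S * Sinv) := by
    have := h.compl_mul_kraus_mul_proj_eq_zero K hfix i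
    rwa [sub_mul, sub_mul, one_mul, sub_eq_zero] at this
  calc K i * S = K i * (S * Sinv) * S := by rw [Matrix.mul_assoc, h.mul_inv_mul]
    _ = S * Sinv * K i * (S * Sinv) * S := by rw [hKP]
    _ = S * (Sinv * K i * S) := by
        rw [Matrix.mul_assoc _ (S * Sinv) S, h.mul_inv_mul]
        simp only [Matrix.mul_assoc]

lemma krausMap_mul_conj (h : IsSupportInverse S Sinv) (hfix : krausMap K (S * S) = S * S)
    (M : Matrix n n ℂ) :
    krausMap K (S * M * S) = S * krausMap (fun i => Sinv * K i * S) M * S :=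
  calc krausMap K (S * M * S) = krausMap (fun i => K i * S) M := by
        rw [krausMap_mul_right, h.isHermitian.eq]
    _ = krausMap (fun i => S * (Sinv * K i * S)) M :=
        congrArg (krausMap · M) (funext (h.kraus_mul_eq_mul_conj K hfix))
    _ = S * krausMap (fun i => Sinv * K i * S) M * S := by
        rw [← mul_krausMap_mul_conjTranspose, h.isHermitian.eq]

lemma krausMap_conj_one (h : IsSupportInverse S Sinv) (hfix : krausMap K (S * S) = S * S) :
    krausMap (fun i => Sinv * K i * S) 1 = S * Sinv := by
  rw [h.krausMap_conj, Matrix.mul_one, hfix, h.inv_mul_mul_self_mul_inv]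

lemma sum_conj_mul_self_conj (h : IsSupportInverse S Sinv) (hK : ∑ i, (K i)ᴴ * K i = 1)
    (hfix : krausMap K (S * S) = S * S) :
    ∑ i, (Sinv * K i * S)ᴴ * (S * S) * (Sinv * K i * S) = S * S := by
  have hterm (i : ι) :
      (Sinv * K i * S)ᴴ * (S * S) * (Sinv * K i * S) = S * ((K i)ᴴ * K i) * S :=
    calc (Sinv * K i * S)ᴴ * (S * S) * (Sinv * K i * S)
        = (S * (Sinv * K i * S))ᴴ * (S * (Sinv * K i * S)) := by
          rw [conjTranspose_mul S, h.isHermitian.eq]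
          simp only [Matrix.mul_assoc]
      _ = (K i * S)ᴴ * (K i * S) := by rw [← h.kraus_mul_eq_mul_conj K hfix]
      _ = S * ((K i)ᴴ * K i) * S := by
          rw [conjTranspose_mul, h.isHermitian.eq]
          simp only [Matrix.mul_assoc]
  rw [Finset.sum_congr rfl fun i _ => hterm i, ← Finset.sum_mul, ← Finset.mul_sum, hK,
    Matrix.mul_one]

lemma krausMap_conj_of_fixed (h : IsSupportInverse S Sinv) (hK : ∑ i, (K i)ᴴ * K i = 1)
    (hfix : krausMap K (S * S) = S * S) {B : Matrix n n ℂ} (hB : krausMap K B = B) :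
    krausMap (fun i => Sinv * K i * S) (Sinv * B * Sinv) = Sinv * B * Sinv := by
  have hSBS : S * (Sinv * B * Sinv) * S = S * Sinv * B * (S * Sinv) :=
    calc S * (Sinv * B * Sinv) * S = S * Sinv * B * (Sinv * S) := by simp only [Matrix.mul_assoc]
      _ = S * Sinv * B * (S * Sinv) := by rw [← h.commute.eq]
  rw [h.krausMap_conj, hSBS,
    krausMap_compression K hK h.isStarProjection (h.compl_mul_kraus_mul_proj_eq_zero K hfix) hB]
  calc Sinv * (S * Sinv * B * (S * Sinv)) * Sinv
      = Sinv * (S * Sinv) * B * (S * Sinv * Sinv) := by simp only [Matrix.mul_assoc]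
    _ = Sinv * B * Sinv := by rw [h.inv_mul_proj, h.proj_mul_inv]

lemma conj_commute_of_fixed (h : IsSupportInverse S Sinv) (hK : ∑ i, (K i)ᴴ * K i = 1)
    (hfix : krausMap K (S * S) = S * S) {B : Matrix n n ℂ} (hB : krausMap K B = B) (i : ι) :
    Commute (Sinv * B * Sinv) (Sinv * K i * S) := by
  have hYH : krausMap (fun i => Sinv * K i * S) (Sinv * B * Sinv)ᴴ = (Sinv * B * Sinv)ᴴ := by
    have hBH : krausMap K Bᴴ = Bᴴ := by rw [krausMap_conjTranspose, hB]
    rw [conjTranspose_mul, conjTranspose_mul, h.isHermitian_inv.eq, ← Matrix.mul_assoc]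
    exact h.krausMap_conj_of_fixed K hK hfix hBH
  have hunit : Sinv * B * Sinv * krausMap (fun i => Sinv * K i * S) 1 * (Sinv * B * Sinv)ᴴ
      = Sinv * B * Sinv * (Sinv * B * Sinv)ᴴ := by
    rw [h.krausMap_conj_one K hfix, Matrix.mul_assoc (Sinv * B) Sinv, h.inv_mul_proj]
  have hzero := mul_commutator_eq_zero_of_fixed h.posSemidef_mul_self
    (h.sum_conj_mul_self_conj K hK hfix) (h.krausMap_conj_of_fixed K hK hfix hB) hYH hunit i
  have hproj : S * Sinv * (Sinv * B * Sinv * (Sinv * K i * S) - Sinv * K i * S * (Sinv * B * Sinv))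
      = Sinv * B * Sinv * (Sinv * K i * S) - Sinv * K i * S * (Sinv * B * Sinv) := by
    simp only [mul_sub, ← Matrix.mul_assoc, h.proj_mul_inv]
  rw [Commute, SemiconjBy, ← sub_eq_zero, ← hproj, ← h.inv_mul_inv_mul_mul_self,
    Matrix.mul_assoc, hzero, Matrix.mul_zero]

lemma krausMap_conj_mul_of_fixed (h : IsSupportInverse S Sinv) (hK : ∑ i, (K i)ᴴ * K i = 1)
    (hfix : krausMap K (S * S) = S * S) {B C : Matrix n n ℂ} (hB : krausMap K B = B)
    (hC : krausMap K C = C) :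
    krausMap (fun i => Sinv * K i * S) (Sinv * B * Sinv * (Sinv * C * Sinv))
      = Sinv * B * Sinv * (Sinv * C * Sinv) :=
  calc krausMap (fun i => Sinv * K i * S) (Sinv * B * Sinv * (Sinv * C * Sinv))
      = Sinv * B * Sinv * krausMap (fun i => Sinv * K i * S) (Sinv * C * Sinv) := by
        simp only [krausMap_apply, Finset.mul_sum]
        refine Finset.sum_congr rfl fun i _ => ?_
        rw [← Matrix.mul_assoc, ← (h.conj_commute_of_fixed K hK hfix hB i).eq]
        simp only [Matrix.mul_assoc]
    _ = Sinv * B * Sinv * (Sinv * C * Sinv) := by rw [h.krausMap_conj_of_fixed K hK hfix hC]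

end IsSupportInverse

end Matrix

theorem fixed_point_algebra_general {n : Type*} [Fintype n] [DecidableEq n]
    (Φ : Matrix n n ℂ →ₗ[ℂ] Matrix n n ℂ) (hΦ : IsQuantumChannel Φ)
    {X : Type*} [MeasurableSpace X] (μ : Measure X)
    (A : X → Matrix n n ℂ)
    (hA_int : ∀ i j, Integrable (fun x => A x i j) μ)
    (hA_fix : ∀ x, Φ (A x) = A x)
    (E : Matrix n n ℂ) (hE : E = Matrix.of fun i j => ∫ x, A x i j ∂μ)
    (S : Matrix n n ℂ) (hS : S.PosSemidef) (hSE : S * S = E)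
    (Sinv : Matrix n n ℂ) (hSinv : Sinv.PosSemidef)
    (hSinv1 : S * Sinv * S = S) (hSinv2 : Sinv * S * Sinv = Sinv)
    (hSinv3 : Commute S Sinv) :
    (∀ B C : Matrix n n ℂ, Φ B = B → Φ C = C → ∀ a b : ℂ,
        ∃ F : Matrix n n ℂ, Φ F = F ∧
          a • (Sinv * B * Sinv) + b • (Sinv * C * Sinv) = Sinv * F * Sinv) ∧
    (∀ B C : Matrix n n ℂ, Φ B = B → Φ C = C →
        ∃ F : Matrix n n ℂ, Φ F = F ∧
          (Sinv * B * Sinv) * (Sinv * C * Sinv) = Sinv * F * Sinv) ∧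
    (∀ B : Matrix n n ℂ, Φ B = B →
        ∃ F : Matrix n n ℂ, Φ F = F ∧ (Sinv * B * Sinv)ᴴ = Sinv * F * Sinv) ∧
    (∀ B : Matrix n n ℂ, Φ B = B → Φ (S * (Sinv * B * Sinv) * S) = S * (Sinv * B * Sinv) * S) := by
  obtain ⟨ι, _, K, hΦK, hK⟩ := hΦ
  obtain rfl : Φ = krausMap K := LinearMap.ext hΦK
  have h : IsSupportInverse S Sinv := ⟨hS.isHermitian, hSinv.isHermitian, hSinv1, hSinv2, hSinv3⟩
  have hfix : krausMap K (S * S) = S * S := by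
    rw [hSE, hE, linearMap_of_integral_comm _ hA_int]
    simp only [hA_fix]
  refine ⟨fun B C hB hC a b => ⟨a • B + b • C, ?_, ?_⟩,
    fun B C hB hC => ⟨S * (Sinv * B * Sinv * (Sinv * C * Sinv)) * S, ?_, ?_⟩,
    fun B hB => ⟨Bᴴ, ?_, ?_⟩, fun B hB => ?_⟩
  · rw [map_add, map_smul, map_smul, hB, hC]
  · simp only [Matrix.mul_add, Matrix.add_mul, Matrix.mul_smul, Matrix.smul_mul]
  · rw [h.krausMap_mul_conj K hfix, h.krausMap_conj_mul_of_fixed K hK hfix hB hC]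
  · calc Sinv * B * Sinv * (Sinv * C * Sinv)
        = Sinv * S * Sinv * B * Sinv * (Sinv * C * (Sinv * S * Sinv)) := by
          rw [h.inv_mul_inv]
      _ = Sinv * (S * (Sinv * B * Sinv * (Sinv * C * Sinv)) * S) * Sinv := by
          simp only [Matrix.mul_assoc]
  · rw [krausMap_conjTranspose, hB]
  · rw [conjTranspose_mul, conjTranspose_mul, hSinv.isHermitian.eq, Matrix.mul_assoc]
  · rw [h.krausMap_mul_conj K hfix, h.krausMap_conj_of_fixed K hK hfix hB]

/-- **The algebra associated to the fixed points of a channel.**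
Let `Φ` be a quantum channel on a finite-dimensional space, `Fix(Φ)` its set of fixed
points, `A_x` (for `x` in a measure space with nonnegative measure `μ`) a family of
positive semidefinite fixed points, and `E = ∫ A_x μ(dx)` (entrywise).  Let `S = E^{1/2}`
be the positive square root of `E` and `Sinv = E^{-1/2}` its inverse on the support of
`E`.  Then the set `𝒜 = E^{-1/2} Fix(Φ) E^{-1/2}` is a matrix `*`-algebra — closed under
linear combinations, products, and adjoints — and moreover `E^{1/2} 𝒜 E^{1/2} ⊆ Fix(Φ)`. -/
theorem fixed_point_algebra {n : Type*} [Fintype n] [DecidableEq n]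
    (Φ : Matrix n n ℂ →ₗ[ℂ] Matrix n n ℂ) (hΦ : IsQuantumChannel Φ)
    {X : Type*} [MeasurableSpace X] (μ : Measure X)
    (A : X → Matrix n n ℂ)
    (hA_int : ∀ i j, Integrable (fun x => A x i j) μ)
    (hA_psd : ∀ x, (A x).PosSemidef)
    (hA_fix : ∀ x, Φ (A x) = A x)
    (E : Matrix n n ℂ) (hE : E = Matrix.of fun i j => ∫ x, A x i j ∂μ)
    (S : Matrix n n ℂ) (hS : S.PosSemidef) (hSE : S * S = E)
    (Sinv : Matrix n n ℂ) (hSinv : Sinv.PosSemidef)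
    (hSinv1 : S * Sinv * S = S) (hSinv2 : Sinv * S * Sinv = Sinv)
    (hSinv3 : Commute S Sinv) :
    (∀ B C : Matrix n n ℂ, Φ B = B → Φ C = C → ∀ a b : ℂ,
        ∃ F : Matrix n n ℂ, Φ F = F ∧
          a • (Sinv * B * Sinv) + b • (Sinv * C * Sinv) = Sinv * F * Sinv) ∧
    (∀ B C : Matrix n n ℂ, Φ B = B → Φ C = C →
        ∃ F : Matrix n n ℂ, Φ F = F ∧
          (Sinv * B * Sinv) * (Sinv * C * Sinv) = Sinv * F * Sinv) ∧
    (∀ B : Matrix n n ℂ, Φ B = B →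
        ∃ F : Matrix n n ℂ, Φ F = F ∧ (Sinv * B * Sinv)ᴴ = Sinv * F * Sinv) ∧
    (∀ B : Matrix n n ℂ, Φ B = B → Φ (S * (Sinv * B * Sinv) * S) = S * (Sinv * B * Sinv) * S) :=
  fixed_point_algebra_general Φ hΦ μ A hA_int hA_fix E hE S hS hSE Sinv hSinv hSinv1 hSinv2 hSinv3
end

section
/- For the uniform ensemble of N-copy pure qubit states {(|n⟩⟨n|)^{⊗N}, d²n} (Haar measure on the Bloch sphere), the Holevo χ quantity equals log(N+1). -/
/-!
Averaging over the azimuth `φ` kills every matrix entry `⟨f|ρ̄|g⟩` between computational basis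
states of different Hamming weight, and for equal weights `k` the polar integral is the Beta
integral `B(N - k + 1, k + 1)`. Hence `ρ̄ = (N + 1)⁻¹ P`, where `P` is the projector onto the
symmetric subspace. As `P` is idempotent of trace `N + 1`, the eigenvalues of `ρ̄` are `(N + 1)⁻¹`
(with multiplicity `N + 1`) and `0`, so its entropy is `log (N + 1)`.
-/

open Matrix Real

/-- The pure qubit state with Bloch vector given by spherical angles `(θ, φ)`:
`|n⟩ = (cos(θ/2), e^{iφ} sin(θ/2))`. -/
noncomputable def blochVec (θ φ : ℝ) : Fin 2 → ℂ :=
  fun i => if i = 0 then (Real.cos (θ / 2) : ℂ)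
           else Complex.exp (Complex.I * (φ : ℂ)) * (Real.sin (θ / 2) : ℂ)

/-- The average of the `N`-copy pure states `(|n⟩⟨n|)^{⊗N}` over the uniform (Haar)
measure on the Bloch sphere, written in spherical coordinates with density
`sin θ / (4π)`. -/
noncomputable def avgPureState (N : ℕ) :
    Matrix (Fin N → Fin 2) (Fin N → Fin 2) ℂ :=
  Matrix.of fun f g =>
    (1 / (4 * Real.pi) : ℂ) *
      ∫ θ in (0 : ℝ)..Real.pi, ∫ φ in (0 : ℝ)..(2 * Real.pi),
        ((Real.sin θ : ℂ) * ∏ i, blochVec θ φ (f i) * (starRingEnd ℂ) (blochVec θ φ (g i)))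

open Finset
open scoped ComplexConjugate

namespace Matrix.IsHermitian

variable {𝕜 n : Type*} [RCLike 𝕜] [Fintype n] [DecidableEq n] {A : Matrix n n 𝕜}

theorem eigenvalues_eq_zero_or_eq_of_mul_self_eq_smul (hA : A.IsHermitian) {c : ℝ}
    (h : A * A = (c : 𝕜) • A) (i : n) : hA.eigenvalues i = 0 ∨ hA.eigenvalues i = c := by
  set v := ⇑(hA.eigenvectorBasis i)
  have hv : v ≠ 0 := (WithLp.ofLp_eq_zero 2).ne.2 (hA.eigenvectorBasis.orthonormal.ne_zero i)
  have hAv : A *ᵥ v = hA.eigenvalues i • v := hA.mulVec_eigenvectorBasis i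
  have key : (hA.eigenvalues i * hA.eigenvalues i) • v = (c * hA.eigenvalues i) • v := by
    calc (hA.eigenvalues i * hA.eigenvalues i) • v = A *ᵥ (A *ᵥ v) := by
          rw [hAv, mulVec_smul, hAv, smul_smul]
      _ = (c * hA.eigenvalues i) • v := by
          rw [mulVec_mulVec, h, smul_mulVec, hAv, RCLike.real_smul_eq_coe_smul (K := 𝕜),
            smul_smul, RCLike.real_smul_eq_coe_smul (K := 𝕜)]
          push_cast; rfl
  have hquad : hA.eigenvalues i * (hA.eigenvalues i - c) = 0 := by
    linear_combination smul_left_injective ℝ hv key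
  rcases mul_eq_zero.mp hquad with h0 | hc
  · exact .inl h0
  · exact .inr (sub_eq_zero.mp hc)

theorem neg_sum_eigenvalues_mul_log_eq_log_of_eq_inv_smul (hA : A.IsHermitian)
    {P : Matrix n n 𝕜} {d : ℕ} (hP : P * P = P) (hPd : P.trace = d)
    (hAP : A = (d : 𝕜)⁻¹ • P) :
    -∑ i, hA.eigenvalues i * log (hA.eigenvalues i) = log d := by
  subst hAP
  have hAA : (d : 𝕜)⁻¹ • P * (d : 𝕜)⁻¹ • P = ((d⁻¹ : ℝ) : 𝕜) • (d : 𝕜)⁻¹ • P := by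
    rw [smul_mul_smul, hP, smul_smul]
    push_cast
    rfl
  have hsum : ∑ i, hA.eigenvalues i = (d : ℝ)⁻¹ * d := by
    apply RCLike.ofReal_injective (K := 𝕜)
    push_cast
    rw [← hA.trace_eq_sum_eigenvalues, trace_smul, hPd, smul_eq_mul]
  have hterm (i : n) :
      hA.eigenvalues i * log (hA.eigenvalues i) = hA.eigenvalues i * log (d : ℝ)⁻¹ := by
    rcases hA.eigenvalues_eq_zero_or_eq_of_mul_self_eq_smul hAA i with h | h <;> simp [h]
  rw [sum_congr rfl fun i _ => hterm i, ← sum_mul, hsum, log_inv]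
  rcases eq_or_ne (d : ℝ) 0 with hd | hd
  · simp [hd]
  · field_simp

end Matrix.IsHermitian

section SymmetricProjector

variable (𝕜 ι : Type*) [Field 𝕜] [Fintype ι] [DecidableEq ι]

/-- The projector onto the symmetric subspace of `(𝕜²)^{⊗ι}`, i.e. `∑ₖ |Dₖ⟩⟨Dₖ|` for the Dicke
states `|Dₖ⟩`, the normalized sums of the basis vectors of Hamming weight `k`. -/
def symmetricProjector : Matrix (ι → Fin 2) (ι → Fin 2) 𝕜 :=
  of fun f g =>
    if hammingNorm f = hammingNorm g then ((Fintype.card ι).choose (hammingNorm f) : 𝕜)⁻¹ else 0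

variable {𝕜 ι}

theorem card_filter_hammingNorm_eq (k : ℕ) :
    #{f : ι → Fin 2 | hammingNorm f = k} = (Fintype.card ι).choose k := by
  rw [← card_univ, ← card_powersetCard]
  refine card_nbij' (fun f => ({i | f i ≠ 0} : Finset ι)) (fun s i => if i ∈ s then 1 else 0)
    ?_ ?_ ?_ ?_
  · intro f hf
    simpa [mem_powersetCard, hammingNorm] using hf
  · intro s hs
    simp_all [mem_powersetCard, hammingNorm]
  · intro f _
    funext i
    by_cases h : f i = 0 <;> simp [h, Fin.eq_one_of_ne_zero]
  · intro s _
    ext i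
    simp

theorem sum_ite_hammingNorm_eq (k : ℕ) (x : 𝕜) :
    ∑ f : ι → Fin 2, (if hammingNorm f = k then x else 0) = (Fintype.card ι).choose k * x := by
  rw [sum_ite, sum_const_zero, add_zero, sum_const, card_filter_hammingNorm_eq, nsmul_eq_mul]

variable [CharZero 𝕜]

theorem symmetricProjector_mul_self :
    symmetricProjector 𝕜 ι * symmetricProjector 𝕜 ι = symmetricProjector 𝕜 ι := by
  ext f g
  have hC : ((Fintype.card ι).choose (hammingNorm f) : 𝕜) ≠ 0 :=
    Nat.cast_ne_zero.mpr (Nat.choose_pos hammingNorm_le_card_fintype).ne'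
  simp only [mul_apply, symmetricProjector, of_apply, ite_mul, zero_mul, mul_ite, mul_zero]
  by_cases hfg : hammingNorm f = hammingNorm g
  · rw [if_pos hfg]
    calc _ = ∑ j : ι → Fin 2, if hammingNorm j = hammingNorm f then
          ((Fintype.card ι).choose (hammingNorm f) : 𝕜)⁻¹ *
            ((Fintype.card ι).choose (hammingNorm f) : 𝕜)⁻¹ else 0 :=
          sum_congr rfl fun j _ => by grind
      _ = _ := by rw [sum_ite_hammingNorm_eq, mul_inv_cancel_left₀ hC]
  · rw [if_neg hfg]
    exact sum_eq_zero fun j _ => by grind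

theorem trace_symmetricProjector :
    (symmetricProjector 𝕜 ι).trace = Fintype.card ι + 1 := by
  have hfib (f : ι → Fin 2) : ((Fintype.card ι).choose (hammingNorm f) : 𝕜)⁻¹
      = ∑ k ∈ range (Fintype.card ι + 1),
          if hammingNorm f = k then ((Fintype.card ι).choose k : 𝕜)⁻¹ else 0 := by
    rw [sum_ite_eq]
    simp [Nat.lt_succ_of_le hammingNorm_le_card_fintype]
  simp only [trace, Matrix.diag, symmetricProjector, of_apply, if_true, hfib]
  rw [sum_comm]
  simp_rw [sum_ite_hammingNorm_eq]
  rw [sum_congr rfl fun k hk => mul_inv_cancel₀ (Nat.cast_ne_zero.mpr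
    (Nat.choose_pos (Nat.le_of_lt_succ (mem_range.mp hk))).ne')]
  simp

end SymmetricProjector

theorem integral_pow_mul_one_sub_pow (a b : ℕ) :
    ∫ x in (0 : ℝ)..1, (x : ℂ) ^ a * (1 - (x : ℂ)) ^ b
      = (a.factorial * b.factorial : ℂ) / (a + b + 1).factorial := by
  have h := Complex.betaIntegral_eq_Gamma_mul_div (a + 1) (b + 1)
    (by simp; positivity) (by simp; positivity)
  have hab : (a + 1 + (b + 1) : ℂ) = ((a + b + 1 : ℕ) : ℂ) + 1 := by push_cast; ring
  rw [hab, Complex.Gamma_nat_eq_factorial, Complex.Gamma_nat_eq_factorial,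
    Complex.Gamma_nat_eq_factorial, Complex.betaIntegral] at h
  simpa [← Complex.cpow_natCast] using h

theorem integral_sin_mul_cos_half_pow_mul_sin_half_pow (a b : ℕ) :
    ∫ θ in (0 : ℝ)..π, (sin θ : ℂ) * (cos (θ / 2) : ℂ) ^ (2 * a) * (sin (θ / 2) : ℂ) ^ (2 * b)
      = 2 * (a.factorial * b.factorial : ℂ) / (a + b + 1).factorial := by
  have hderiv : ∀ θ ∈ Set.uIcc 0 π, HasDerivAt (fun θ => sin (θ / 2) ^ 2) (sin θ / 2) θ := by
    intro θ _
    refine (((hasDerivAt_id θ).div_const 2).sin.pow 2).congr_deriv ?_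
    rw [show sin θ = sin (2 * (θ / 2)) by ring_nf, sin_two_mul]
    simp
    ring
  calc _ = ∫ θ in (0 : ℝ)..π, (sin θ / 2) •
        (2 * (((sin (θ / 2) ^ 2 : ℝ) : ℂ) ^ b * (1 - ((sin (θ / 2) ^ 2 : ℝ) : ℂ)) ^ a)) := by
        refine intervalIntegral.integral_congr fun θ _ => ?_
        rw [Complex.real_smul]
        push_cast
        rw [← Complex.cos_sq']
        ring
    _ = ∫ u in sin (0 / 2) ^ 2..sin (π / 2) ^ 2, 2 * ((u : ℂ) ^ b * (1 - (u : ℂ)) ^ a) :=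
        intervalIntegral.integral_deriv_smul_comp hderiv (by fun_prop)
          (g := fun u : ℝ => 2 * ((u : ℂ) ^ b * (1 - (u : ℂ)) ^ a)) (by fun_prop)
    _ = _ := by
        rw [zero_div, sin_zero, sin_pi_div_two, zero_pow two_ne_zero, one_pow,
          intervalIntegral.integral_const_mul, integral_pow_mul_one_sub_pow, add_comm b a]
        ring

theorem integral_exp_pow_mul_conj_pow (m n : ℕ) :
    ∫ φ in (0 : ℝ)..2 * π, Complex.exp (Complex.I * φ) ^ m * conj (Complex.exp (Complex.I * φ)) ^ n
      = if m = n then 2 * π else 0 := by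
  have hphase (φ : ℝ) : Complex.exp (Complex.I * φ) ^ m * conj (Complex.exp (Complex.I * φ)) ^ n
      = Complex.exp ((m - n : ℤ) * Complex.I * φ) := by
    rw [← Complex.exp_conj, ← Complex.exp_nat_mul, ← Complex.exp_nat_mul, ← Complex.exp_add]
    simp only [map_mul, Complex.conj_I, Complex.conj_ofReal]
    push_cast
    ring_nf
  simp_rw [hphase]
  split_ifs with hmn
  · simp [hmn]
  · have hne : ((m - n : ℤ) * Complex.I : ℂ) ≠ 0 :=
      mul_ne_zero (by exact_mod_cast sub_ne_zero.mpr (Int.ofNat_inj.not.mpr hmn)) Complex.I_ne_zero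
    rw [integral_exp_mul_complex hne, Complex.ofReal_zero, mul_zero, Complex.exp_zero]
    rw [show (m - n : ℤ) * Complex.I * ↑(2 * π) = (m - n : ℤ) * (2 * π * Complex.I) by
      push_cast; ring, Complex.exp_int_mul_two_pi_mul_I]
    simp

theorem prod_blochVec {ι : Type*} [Fintype ι] (θ φ : ℝ) (f : ι → Fin 2) :
    ∏ i, blochVec θ φ (f i) = (cos (θ / 2) : ℂ) ^ (Fintype.card ι - hammingNorm f) *
      (Complex.exp (Complex.I * φ) * sin (θ / 2)) ^ hammingNorm f := by
  simp only [blochVec, prod_ite, prod_const]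
  congr 2
  rw [hammingNorm, ← card_univ, ← card_filter_add_card_filter_not (s := univ) (f · = 0),
    Nat.add_sub_cancel]

theorem avgPureState_eq (N : ℕ) :
    avgPureState N = ((N + 1 : ℕ) : ℂ)⁻¹ • symmetricProjector ℂ (Fin N) := by
  ext f g
  simp only [avgPureState, symmetricProjector, of_apply, Matrix.smul_apply, smul_eq_mul,
    Fintype.card_fin]
  set a := hammingNorm f
  set b := hammingNorm g
  have hintegrand (θ φ : ℝ) :
      (sin θ : ℂ) * ∏ i, blochVec θ φ (f i) * conj (blochVec θ φ (g i)) =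
        (sin θ : ℂ) * (cos (θ / 2) : ℂ) ^ ((N - a) + (N - b)) * (sin (θ / 2) : ℂ) ^ (a + b) *
          (Complex.exp (Complex.I * φ) ^ a * conj (Complex.exp (Complex.I * φ)) ^ b) := by
    rw [prod_mul_distrib, ← map_prod, prod_blochVec, prod_blochVec, Fintype.card_fin]
    simp only [map_mul, map_pow, Complex.conj_ofReal]
    ring
  simp only [hintegrand, intervalIntegral.integral_const_mul, integral_exp_pow_mul_conj_pow]
  by_cases hab : a = b
  · rw [if_pos hab, if_pos hab, ← hab, intervalIntegral.integral_mul_const, ← two_mul, ← two_mul,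
      integral_sin_mul_cos_half_pow_mul_sin_half_pow]
    have ha : a ≤ N := hammingNorm_le_card_fintype.trans_eq (Fintype.card_fin N)
    rw [Nat.sub_add_cancel ha, Nat.cast_choose ℂ ha, Nat.factorial_succ]
    push_cast
    field_simp
    ring
  · simp [hab]

/-- The `- 0` is the average entropy of the members of the ensemble, which are pure. -/
theorem chi_uniform_pure_ensemble (N : ℕ)
    (hherm : (avgPureState N).IsHermitian) :
    (-∑ i, hherm.eigenvalues i * Real.log (hherm.eigenvalues i)) - 0 = Real.log (N + 1) := by
  rw [sub_zero, hherm.neg_sum_eigenvalues_mul_log_eq_log_of_eq_inv_smul symmetricProjector_mul_self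
    (by simp [trace_symmetricProjector]) (avgPureState_eq N), Nat.cast_succ]
end

section
/- For a Young diagram λ = (λ_1 ≥ ... ≥ λ_d ≥ 0) with ∑λ_i = N and at most r nonzero rows (λ_i = 0 for i > r), the dimension of the corresponding irreducible GL(d) representation, d_λ = ∏_{1≤i<j≤d} (λ_i − λ_j − i + j) / ∏_{k=1}^{d−1} k!, satisfies d_λ ≤ (N+d−1)^{(2dr−r²−r)/2}. -/
/-!
A factor `λᵢ - λⱼ + (j - i)` with `i < r` is at most `(N + d - 1)(j - i)`, since `λᵢ - λⱼ ≤ N` and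
`1 ≤ j - i ≤ d - 1`; a factor with `r ≤ i` equals `j - i`, both rows being empty. The product of
all `j - i` is the Vandermonde determinant of `0, …, d - 1`, i.e. the superfactorial
`∏_{k<d} k!`, which cancels the denominator, and the number of pairs `i < j` with `i < r` is
`∑_{i<r} (d - 1 - i) = (2dr - r² - r)/2`.
-/

open scoped Classical

/-- The Weyl dimension formula for the irreducible `GL(d)` representation labeled by a
Young diagram `λ = (λ_1 ≥ … ≥ λ_d ≥ 0)` (0-indexed here):
`d_λ = ∏_{i<j} (λ_i - λ_j - i + j) / ∏_{k=1}^{d-1} k!`. -/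
noncomputable def weylDim (d : ℕ) (lam : Fin d → ℕ) : ℝ :=
  (∏ p ∈ Finset.univ.filter (fun p : Fin d × Fin d => p.1 < p.2),
      ((lam p.1 : ℝ) - (lam p.2 : ℝ) - (p.1 : ℝ) + (p.2 : ℝ))) /
    ∏ k ∈ Finset.range d, (Nat.factorial k : ℝ)

open Finset Nat

@[to_additive]
lemma prod_filter_lt_eq_prod_Ioi {α M : Type*} [Fintype α] [LinearOrder α]
    [LocallyFiniteOrderTop α] [CommMonoid M] (f : α × α → M) :
    ∏ p : α × α with p.1 < p.2, f p = ∏ i, ∏ j ∈ Ioi i, f (i, j) := by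
  rw [prod_filter, Fintype.prod_prod_type]
  refine prod_congr rfl fun i _ => ?_
  rw [← prod_filter, filter_lt_eq_Ioi]

lemma prod_filter_lt_sub_eq_prod_factorial (d : ℕ) :
    ∏ p : Fin d × Fin d with p.1 < p.2, ((p.2 : ℝ) - p.1) = ∏ k ∈ range d, (k ! : ℝ) := by
  rw [prod_filter_lt_eq_prod_Ioi]
  cases d with
  | zero => simp
  | succ n =>
    rw [← Matrix.det_vandermonde (fun i : Fin (n + 1) => (i : ℝ)),
      Matrix.det_vandermonde_id_eq_superFactorial, ← Nat.prod_range_succ_factorial]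
    push_cast
    rfl

lemma card_filter_lt_and_fst_lt {d r : ℕ} (hrd : r ≤ d) :
    #{p : Fin d × Fin d | p.1 < p.2 ∧ (p.1 : ℕ) < r} = ∑ i ∈ range r, (d - 1 - i) := by
  rw [← filter_filter, card_filter, sum_filter_lt_eq_sum_Ioi]
  dsimp only
  rw [sum_congr rfl fun i _ => sum_ite_irrel _ _ _ _]
  simp only [sum_const, Fin.card_Ioi, smul_eq_mul, mul_one, mul_zero]
  rw [Fin.sum_univ_eq_sum_range (fun i => if i < r then d - 1 - i else 0), ← sum_filter]
  congr 1
  ext i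
  simp only [mem_filter, mem_range]
  omega

lemma two_mul_sum_range_sub_add (d r : ℕ) (hrd : r ≤ d) :
    2 * ∑ i ∈ range r, (d - 1 - i) + r ^ 2 + r = 2 * d * r := by
  induction r with
  | zero => simp
  | succ n ih =>
    have ih := ih (by omega)
    have hd : 2 * d * (n + 1) = 2 * d * n + 2 * d := by ring
    have hsq : (n + 1) ^ 2 = n ^ 2 + 2 * n + 1 := by ring
    rw [sum_range_succ]
    omega

section WeylFactor

variable {d : ℕ} {lam : Fin d → ℕ} {i j : Fin d}

lemma weylFactor_nonneg (hlam : Antitone lam) (hij : i < j) :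
    0 ≤ (lam i : ℝ) - lam j - i + j := by
  have hl : (lam j : ℝ) ≤ lam i := by exact_mod_cast hlam hij.le
  have hi : (i : ℝ) < j := by exact_mod_cast hij
  linarith

lemma weylFactor_le {N : ℕ} (hN : lam i ≤ N) (hij : i < j) :
    (lam i : ℝ) - lam j - i + j ≤ (N + d - 1) * ((j : ℝ) - i) := by
  have hi : (i : ℝ) + 1 ≤ j := by exact_mod_cast hij
  have hj : (j : ℝ) + 1 ≤ d := by exact_mod_cast j.isLt
  have hl : (lam i : ℝ) ≤ N := by exact_mod_cast hN
  nlinarith [(lam j).cast_nonneg (α := ℝ), N.cast_nonneg (α := ℝ)]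

lemma weylFactor_eq_of_le {r : ℕ} (hrows : ∀ k : Fin d, r ≤ (k : ℕ) → lam k = 0)
    (hi : r ≤ (i : ℕ)) (hij : i ≤ j) : (lam i : ℝ) - lam j - i + j = j - i := by
  rw [hrows i hi, hrows j (hi.trans hij)]
  ring

end WeylFactor

lemma prod_weylFactor_le {d r N : ℕ} {lam : Fin d → ℕ} (hlam : Antitone lam)
    (hN : ∀ k, lam k ≤ N) (hrows : ∀ k : Fin d, r ≤ (k : ℕ) → lam k = 0) :
    ∏ p : Fin d × Fin d with p.1 < p.2, ((lam p.1 : ℝ) - lam p.2 - p.1 + p.2) ≤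
      ((N : ℝ) + d - 1) ^ #{p : Fin d × Fin d | p.1 < p.2 ∧ (p.1 : ℕ) < r} *
        ∏ p : Fin d × Fin d with p.1 < p.2, ((p.2 : ℝ) - p.1) := by
  calc _ ≤ ∏ p : Fin d × Fin d with p.1 < p.2,
          ((if (p.1 : ℕ) < r then (N + d - 1 : ℝ) else 1) * ((p.2 : ℝ) - p.1)) := by
        refine prod_le_prod (fun p hp => weylFactor_nonneg hlam (mem_filter.1 hp).2)
          fun p hp => ?_
        have hp : p.1 < p.2 := (mem_filter.1 hp).2
        split_ifs with hr
        · exact weylFactor_le (hN p.1) hp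
        · rw [one_mul, weylFactor_eq_of_le hrows (not_lt.1 hr) hp.le]
    _ = _ := by
      rw [prod_mul_distrib, prod_ite, prod_const, prod_const_one, mul_one, filter_filter]

theorem weylDim_upper_bound_general (d r N : ℕ) (hrd : r ≤ d)
    (lam : Fin d → ℕ) (hmono : ∀ i j : Fin d, i ≤ j → lam j ≤ lam i)
    (hsum : ∑ i, lam i = N) (hrows : ∀ i : Fin d, r ≤ (i : ℕ) → lam i = 0) :
    weylDim d lam ≤ ((N : ℝ) + d - 1) ^ ((2 * d * r - r ^ 2 - r) / 2) := by
  have hN : ∀ i, lam i ≤ N := fun i =>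
    hsum ▸ single_le_sum (fun _ _ => Nat.zero_le _) (mem_univ i)
  have hexp :
      (2 * d * r - r ^ 2 - r) / 2 = #{p : Fin d × Fin d | p.1 < p.2 ∧ (p.1 : ℕ) < r} := by
    have hsum_range := two_mul_sum_range_sub_add d r hrd
    rw [card_filter_lt_and_fst_lt hrd]
    omega
  rw [weylDim, div_le_iff₀ (by positivity), hexp, ← prod_filter_lt_sub_eq_prod_factorial]
  exact prod_weylFactor_le (fun i j h => hmono i j h) hN hrows

/-- For a Young diagram with `N` boxes and at most `r ≤ d` nonzero rows, the Weyl
dimension satisfies `d_λ ≤ (N+d-1)^((2dr - r² - r)/2)`. -/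
theorem weylDim_upper_bound (d r N : ℕ) (hr : 1 ≤ r) (hrd : r ≤ d)
    (lam : Fin d → ℕ) (hmono : ∀ i j : Fin d, i ≤ j → lam j ≤ lam i)
    (hsum : ∑ i, lam i = N) (hrows : ∀ i : Fin d, r ≤ (i : ℕ) → lam i = 0) :
    weylDim d lam ≤ ((N : ℝ) + d - 1) ^ ((2 * d * r - r ^ 2 - r) / 2) :=
  weylDim_upper_bound_general d r N hrd lam hmono hsum hrows
end
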